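/- arXiv:2403.15527 — 6 statements merged into one kernel-verified Lean document; each statement's English description precedes it below -/
import Mathlib

section
/- Randomized Markov inequality: Let X be a nonnegative real-valued random variable and let U be a random variable uniformly distributed on [0,1] that is independent of X. Then for every a > 0, P(X ≥ a·U) ≤ E[X]/a. -/
open MeasureTheory ProbabilityTheory

/-- **Randomized Markov inequality.** If `X ≥ 0` and `U` is uniform on `[0,1]`
and independent of `X`, then for every `a > 0`,
`P(X ≥ a·U) ≤ E[X]/a`. -/
theorem randomized_markov
    {Ω : Type*} [MeasurableSpace Ω] (P : Measure Ω) [IsProbabilityMeasure P]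
    (X U : Ω → ℝ) (hX : Measurable X) (hU : Measurable U)
    (hXnn : ∀ ω, 0 ≤ X ω)
    (hUunif : P.map U = volume.restrict (Set.Icc (0 : ℝ) 1))
    (hindep : IndepFun X U P)
    (a : ℝ) (ha : 0 < a) :
    P {ω | a * U ω ≤ X ω} ≤ (∫⁻ ω, ENNReal.ofReal (X ω) ∂P) / ENNReal.ofReal a := by
  have hmap : P.map (fun ω => (X ω, U ω)) = (P.map X).prod (P.map U) :=
    (indepFun_iff_map_prod_eq_prod_map_map hX.aemeasurable hU.aemeasurable).mp hindep
  have hs : MeasurableSet {p : ℝ × ℝ | a * p.2 ≤ p.1} :=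
    measurableSet_le (measurable_const.mul measurable_snd) measurable_fst
  have h1 : P {ω | a * U ω ≤ X ω}
      = (P.map (fun ω => (X ω, U ω))) {p : ℝ × ℝ | a * p.2 ≤ p.1} := by
    rw [Measure.map_apply (hX.prodMk hU) hs]
    rfl
  rw [h1, hmap, Measure.prod_apply hs]
  have hbound : ∀ x : ℝ, (P.map U) (Prod.mk x ⁻¹' {p : ℝ × ℝ | a * p.2 ≤ p.1})
      ≤ ENNReal.ofReal x / ENNReal.ofReal a := by
    intro x
    rw [hUunif]
    have hset : Prod.mk x ⁻¹' {p : ℝ × ℝ | a * p.2 ≤ p.1} = Set.Iic (x / a) := by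
      ext u
      simp only [Set.mem_preimage, Set.mem_setOf_eq, Set.mem_Iic]
      rw [le_div_iff₀ ha, mul_comm]
    rw [hset, Measure.restrict_apply measurableSet_Iic]
    calc volume (Set.Iic (x / a) ∩ Set.Icc 0 1)
        ≤ volume (Set.Icc 0 (x / a)) := by
          apply measure_mono
          rintro u ⟨h1, h2, _⟩
          exact ⟨h2, h1⟩
      _ = ENNReal.ofReal (x / a) := by rw [Real.volume_Icc, sub_zero]
      _ = ENNReal.ofReal x / ENNReal.ofReal a := by rw [ENNReal.ofReal_div_of_pos ha]
  calc ∫⁻ x, (P.map U) (Prod.mk x ⁻¹' {p : ℝ × ℝ | a * p.2 ≤ p.1}) ∂(P.map X)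
      ≤ ∫⁻ x, ENNReal.ofReal x / ENNReal.ofReal a ∂(P.map X) :=
        lintegral_mono hbound
    _ = (∫⁻ x, ENNReal.ofReal x ∂(P.map X)) / ENNReal.ofReal a := by
        simp only [div_eq_mul_inv]
        exact lintegral_mul_const' _ _ (by simp [ha])
    _ = (∫⁻ ω, ENNReal.ofReal (X ω) ∂P) / ENNReal.ofReal a := by
        rw [lintegral_map ENNReal.measurable_ofReal hX]
end

section
/- Proposition 1 (coverage of the randomized weighted majority vote with data-dependent weights): Let K ≥ 2, let α ∈ (0,1), and let φ_1, …, φ_K be {0,1}-valued random variables with E[φ_k] ≤ α for each k (the miscoverage indicators of K conformal prediction intervals, each with marginal coverage at least 1−α). Let W = (W_1, …, W_K) be a random vector taking values in the (K−1)-dimensional probability simplex (W_k ∈ [0,1] for all k and ∑_{k=1}^K W_k = 1), and suppose that for each k, E[W_k · φ_k] ≤ E[W_k] · E[φ_k] (which holds in particular when W_k and φ_k are independent or negatively associated). Let U be uniformly distributed on [0,1] and independent of ∑_{k=1}^K W_k φ_k. Then P(∑_{k=1}^K W_k φ_k ≥ (1 − U)/2) ≤ 2α. Equivalently, the randomized weighted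 majority vote set C = {y : ∑_k W_k·1{y ∈ C_k} > (1+U)/2} has coverage at least 1 − 2α. -/
open MeasureTheory ProbabilityTheory

/-- **Proposition 1**: coverage of the randomized weighted majority vote with
data-dependent weights. If each miscoverage indicator `φ k` (a `{0,1}`-valued
random variable) has mean at most `α`, the random weights `W` lie in the
probability simplex with `E[W_k φ_k] ≤ E[W_k]·E[φ_k]`, and `U` is uniform on
`[0,1]` independent of `∑ k, W k * φ k`, then
`P(∑ k, W_k φ_k ≥ (1 − U)/2) ≤ 2α`, i.e. the randomized weighted majority
vote set has coverage at least `1 − 2α`. -/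
theorem randomized_weighted_majority_vote_coverage
    {Ω : Type*} [MeasurableSpace Ω] (P : Measure Ω) [IsProbabilityMeasure P]
    (K : ℕ) (hK : 2 ≤ K) (α : ℝ) (hα : α ∈ Set.Ioo (0 : ℝ) 1)
    (φ : Fin K → Ω → ℝ) (hφmeas : ∀ k, Measurable (φ k))
    (hφ01 : ∀ k ω, φ k ω = 0 ∨ φ k ω = 1)
    (hφmean : ∀ k, ∫ ω, φ k ω ∂P ≤ α)
    (W : Fin K → Ω → ℝ) (hWmeas : ∀ k, Measurable (W k))
    (hW01 : ∀ k ω, W k ω ∈ Set.Icc (0 : ℝ) 1)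
    (hWsum : ∀ ω, ∑ k, W k ω = 1)
    (hWφ : ∀ k, ∫ ω, W k ω * φ k ω ∂P ≤ (∫ ω, W k ω ∂P) * ∫ ω, φ k ω ∂P)
    (U : Ω → ℝ) (hU : Measurable U)
    (hUunif : P.map U = volume.restrict (Set.Icc (0 : ℝ) 1))
    (hindep : IndepFun (fun ω => ∑ k, W k ω * φ k ω) U P) :
    P {ω | (1 - U ω) / 2 ≤ ∑ k, W k ω * φ k ω} ≤ ENNReal.ofReal (2 * α) := by

  set S : Ω → ℝ := fun ω => ∑ k, W k ω * φ k ω with hSdef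
  have hSmeas : Measurable S := by
    apply Finset.measurable_sum
    exact fun k _ => (hWmeas k).mul (hφmeas k)
  have hφnn : ∀ k ω, 0 ≤ φ k ω := fun k ω => by rcases hφ01 k ω with h | h <;> simp [h]
  have hS0 : ∀ ω, 0 ≤ S ω := fun ω =>
    Finset.sum_nonneg fun k _ => mul_nonneg (hW01 k ω).1 (hφnn k ω)
  have hint : ∀ k, Integrable (fun ω => W k ω * φ k ω) P := by
    intro k
    refine Integrable.mono' (integrable_const 1) ((hWmeas k).mul (hφmeas k)).aestronglyMeasurable ?_
    refine Filter.Eventually.of_forall fun ω => ?_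
    rw [Real.norm_eq_abs, abs_of_nonneg (mul_nonneg (hW01 k ω).1 (hφnn k ω))]
    rcases hφ01 k ω with h | h <;> simp [h, (hW01 k ω).2]
  have hWint : ∀ k, Integrable (W k) P := by
    intro k
    refine Integrable.mono' (integrable_const 1) (hWmeas k).aestronglyMeasurable ?_
    refine Filter.Eventually.of_forall fun ω => ?_
    rw [Real.norm_eq_abs, abs_of_nonneg (hW01 k ω).1]; exact (hW01 k ω).2
  have hSint : Integrable S P := integrable_finset_sum _ fun k _ => hint k
  have hES : ∫ ω, S ω ∂P ≤ α := by
    have h1 : ∫ ω, S ω ∂P = ∑ k, ∫ ω, W k ω * φ k ω ∂P :=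
      integral_finset_sum _ fun k _ => hint k
    rw [h1]
    calc ∑ k, ∫ ω, W k ω * φ k ω ∂P ≤ ∑ k, (∫ ω, W k ω ∂P) * α := by
          refine Finset.sum_le_sum fun k _ => ?_
          exact (hWφ k).trans (mul_le_mul_of_nonneg_left (hφmean k)
            (integral_nonneg fun ω => (hW01 k ω).1))
      _ = (∫ ω, (∑ k, W k ω) ∂P) * α := by
          rw [integral_finset_sum _ fun k _ => hWint k, Finset.sum_mul]
      _ = α := by simp [hWsum]
  have hmap : P.map (fun ω => (S ω, U ω)) = (P.map S).prod (P.map U) :=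
    (indepFun_iff_map_prod_eq_prod_map_map hSmeas.aemeasurable hU.aemeasurable).mp hindep
  have hsetmeas : MeasurableSet {p : ℝ × ℝ | (1 - p.2) / 2 ≤ p.1} :=
    measurableSet_le (by fun_prop) measurable_fst
  have key : P {ω | (1 - U ω) / 2 ≤ S ω}
      = ((P.map S).prod (P.map U)) {p : ℝ × ℝ | (1 - p.2) / 2 ≤ p.1} := by
    rw [← hmap, Measure.map_apply (hSmeas.prodMk hU) hsetmeas]
    rfl
  show P {ω | (1 - U ω) / 2 ≤ S ω} ≤ ENNReal.ofReal (2 * α)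
  rw [key, Measure.prod_apply hsetmeas]
  have hinner : ∀ s : ℝ, 0 ≤ s →
      (P.map U) (Prod.mk s ⁻¹' {p : ℝ × ℝ | (1 - p.2) / 2 ≤ p.1}) ≤ ENNReal.ofReal (2 * s) := by
    intro s hs
    rw [hUunif]
    have hset : (Prod.mk s ⁻¹' {p : ℝ × ℝ | (1 - p.2) / 2 ≤ p.1}) = {u : ℝ | 1 - 2 * s ≤ u} := by
      ext u
      simp only [Set.mem_preimage, Set.mem_setOf_eq]
      constructor <;> intro h <;> linarith
    rw [hset, Measure.restrict_apply' measurableSet_Icc]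
    calc volume ({u : ℝ | 1 - 2 * s ≤ u} ∩ Set.Icc 0 1)
        ≤ volume (Set.Icc (1 - 2 * s) 1) := by
          apply measure_mono
          rintro u ⟨h1, _, h3⟩
          exact ⟨h1, h3⟩
      _ = ENNReal.ofReal (2 * s) := by rw [Real.volume_Icc]; ring_nf
  have hae : ∀ᵐ s ∂(P.map S), s ∈ Set.Ici (0 : ℝ) := by
    exact (MeasureTheory.ae_map_iff hSmeas.aemeasurable
      (measurableSet_Ici : MeasurableSet (Set.Ici (0:ℝ)))).mpr
      (Filter.Eventually.of_forall fun ω => hS0 ω)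
  calc ∫⁻ s, (P.map U) (Prod.mk s ⁻¹' {p : ℝ × ℝ | (1 - p.2) / 2 ≤ p.1}) ∂(P.map S)
      ≤ ∫⁻ s, ENNReal.ofReal (2 * s) ∂(P.map S) := by
        refine lintegral_mono_ae ?_
        filter_upwards [hae] with s hs using hinner s hs
    _ = ∫⁻ ω, ENNReal.ofReal (2 * S ω) ∂P := by
        rw [lintegral_map (by fun_prop) hSmeas]
    _ = ENNReal.ofReal (∫ ω, 2 * S ω ∂P) := by
        rw [ofReal_integral_eq_lintegral_ofReal (hSint.const_mul 2)
          (Filter.Eventually.of_forall fun ω => by simp only [Pi.zero_apply]; linarith [hS0 ω])]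
    _ ≤ ENNReal.ofReal (2 * α) := by
        apply ENNReal.ofReal_le_ofReal
        rw [integral_const_mul]
        linarith
end

section
/- If the intersection of the initial intervals is non-empty, the weighted majority vote set is an interval: Let K ≥ 2, let C_1, …, C_K be order-connected subsets of ℝ (i.e., intervals: for each k, whenever a, b ∈ C_k and a ≤ y ≤ b, then y ∈ C_k), and suppose ⋂_{k=1}^K C_k ≠ ∅. Then for any weight vector w in the (K−1)-dimensional probability simplex and any u ∈ [0,1), the weighted majority vote set C := {y ∈ ℝ : ∑_{k=1}^K w_k·1{y ∈ C_k} > (1+u)/2} is order-connected (an interval). -/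
/-- If the intersection of the initial intervals is non-empty, the weighted
majority vote set is an interval: if each `C k` is order-connected and
`⋂ k, C k ≠ ∅`, then for any weight vector `w` in the probability simplex and
any `u ∈ [0,1)`, the set `{y : ∑ k, w_k·1{y ∈ C_k} > (1+u)/2}` is
order-connected. -/
theorem majority_vote_ordConnected
    (K : ℕ) (hK : 2 ≤ K) (C : Fin K → Set ℝ)
    (hC : ∀ k, (C k).OrdConnected) (hne : (⋂ k, C k).Nonempty)
    (w : Fin K → ℝ) (hw01 : ∀ k, w k ∈ Set.Icc (0 : ℝ) 1) (hwsum : ∑ k, w k = 1)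
    (u : ℝ) (hu : u ∈ Set.Ico (0 : ℝ) 1) :
    {y : ℝ | (1 + u) / 2 < ∑ k, w k * (C k).indicator (1 : ℝ → ℝ) y}.OrdConnected := by
  obtain ⟨x₀, hx₀⟩ := hne
  simp only [Set.mem_iInter] at hx₀
  constructor
  intro a ha b hb y hy
  simp only [Set.mem_setOf_eq] at ha hb ⊢
  rcases le_total y x₀ with h | h
  · calc (1 + u) / 2 < ∑ k, w k * (C k).indicator (1 : ℝ → ℝ) a := ha
      _ ≤ ∑ k, w k * (C k).indicator (1 : ℝ → ℝ) y := by
          refine Finset.sum_le_sum fun k _ => ?_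
          refine mul_le_mul_of_nonneg_left ?_ (hw01 k).1
          by_cases hak : a ∈ C k
          · have hy' : y ∈ C k := (hC k).out hak (hx₀ k) ⟨hy.1, h⟩
            simp [Set.indicator_of_mem, hak, hy']
          · simp only [Set.indicator_of_notMem hak]
            exact Set.indicator_nonneg (fun _ _ => zero_le_one) y
  · calc (1 + u) / 2 < ∑ k, w k * (C k).indicator (1 : ℝ → ℝ) b := hb
      _ ≤ ∑ k, w k * (C k).indicator (1 : ℝ → ℝ) y := by
          refine Finset.sum_le_sum fun k _ => ?_
          refine mul_le_mul_of_nonneg_left ?_ (hw01 k).1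
          by_cases hbk : b ∈ C k
          · have hy' : y ∈ C k := (hC k).out (hx₀ k) hbk ⟨h, hy.2⟩
            simp [Set.indicator_of_mem, hbk, hy']
          · simp only [Set.indicator_of_notMem hbk]
            exact Set.indicator_nonneg (fun _ _ => zero_le_one) y
end

section
/- AdaHedge regret bound (equation (3.2)): Let K ≥ 2, T ≥ 1, and let ℓ_k^{(t)} ≥ 0 for k = 1,…,K and t = 1,…,T be the expert losses. Run AdaHedge (defined in the context) to produce hedge losses h^{(1)}, …, h^{(T)} and set H^{(T)} = ∑_{t=1}^T h^{(t)}. With L_*^{(T)} = min_k L_k^{(T)}, L_+^{(T)} = ∑_{t=1}^T max_k ℓ_k^{(t)}, L_−^{(T)} = ∑_{t=1}^T min_k ℓ_k^{(t)}, s^{(t)} = max_k ℓ_k^{(t)} − min_k ℓ_k^{(t)} and S^{(T)} = max_{1≤t≤T} s^{(t)}, it holds that H^{(T)} ≤ L_*^{(T)} + 2·( S^{(T)}·(ln K)·(L_+^{(T)} − L_*^{(T)})·(L_*^{(T)} − L_−^{(T)}) / (L_+^{(T)} − L_−^{(T)}) )^{1/2} + S^{(T)}·((16/3)·ln K + 2),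 where the fraction is interpreted as 0 when L_+^{(T)} = L_−^{(T)}. -/
open Finset

/-- Cumulative loss of expert `k` after `t` rounds: `L_k^{(t)} = ∑_{s<t} ℓ_k^{(s)}`. -/
noncomputable def cumLoss (K : ℕ) (l : ℕ → Fin K → ℝ) (t : ℕ) (k : Fin K) : ℝ :=
  ∑ s ∈ Finset.range t, l s k

/- AdaHedge weights in round `t`, given the cumulative mixability gap `Δ` so far.
If `Δ > 0`, these are the exponential weights with learning rate `η = ln K / Δ`;
if `Δ ≤ 0` (i.e. `Δ = 0`, corresponding to `η = ∞`), the weight is uniform on the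
set of minimizers of the cumulative loss. -/
open Classical in
noncomputable def ahWeight (K : ℕ) (l : ℕ → Fin K → ℝ) (Δ : ℝ) (t : ℕ) (k : Fin K) : ℝ :=
  if 0 < Δ then
    Real.exp (-(Real.log K / Δ) * cumLoss K l t k) /
      ∑ j : Fin K, Real.exp (-(Real.log K / Δ) * cumLoss K l t j)
  else
    if cumLoss K l t k = ⨅ j, cumLoss K l t j then
      1 / ((Finset.univ.filter fun j : Fin K =>
        cumLoss K l t j = ⨅ j', cumLoss K l t j').card : ℝ)
    else 0

/-- Hedge loss in round `t`: `h^{(t)} = ∑ k, w_k^{(t)} ℓ_k^{(t)}`. -/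
noncomputable def ahHedgeLoss (K : ℕ) (l : ℕ → Fin K → ℝ) (Δ : ℝ) (t : ℕ) : ℝ :=
  ∑ k : Fin K, ahWeight K l Δ t k * l t k

/-- Mix loss in round `t`: `m^{(t)} = −(1/η)·ln(∑ k, w_k^{(t)} exp(−η ℓ_k^{(t)}))`
with `η = ln K / Δ` when `Δ > 0`, and `min_k L_k^{(t)} − min_k L_k^{(t−1)}` when
`Δ = 0` (corresponding to `η = ∞`). -/
noncomputable def ahMixLoss (K : ℕ) (l : ℕ → Fin K → ℝ) (Δ : ℝ) (t : ℕ) : ℝ :=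
  if 0 < Δ then
    -(Δ / Real.log K) *
      Real.log (∑ k : Fin K, ahWeight K l Δ t k * Real.exp (-(Real.log K / Δ) * l t k))
  else (⨅ k, cumLoss K l (t + 1) k) - ⨅ k, cumLoss K l t k

/-- The AdaHedge cumulative mixability gap: `Δ^{(0)} = 0` and
`Δ^{(t+1)} = Δ^{(t)} + (h^{(t)} − m^{(t)})`. -/
noncomputable def ahDelta (K : ℕ) (l : ℕ → Fin K → ℝ) : ℕ → ℝ
  | 0 => 0
  | t + 1 =>
    ahDelta K l t +
      (ahHedgeLoss K l (ahDelta K l t) t - ahMixLoss K l (ahDelta K l t) t)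

/-!
Write `δᵗ = hᵗ - mᵗ` for the mixability gap, so that `Δᵀ = ∑ₜ δᵗ` and `H = M + Δᵀ` with `M` the
total mix loss. The mix losses telescope through the potential
`Φ_Δ(t) = -(Δ / ln K) ln ((1/K) ∑ₖ exp (-(ln K / Δ) Lₖᵗ))` (and `Φ_0(t) = minₖ Lₖᵗ`), which is
increasing in `Δ` and at most `L* + Δ`; since `Δᵗ` increases with `t`, `M ≤ L* + Δᵀ`, hence
`H ≤ L* + 2Δᵀ`.

A Bernstein-type bound `δᵗ (3 - η sᵗ) ≤ (3/2) η vᵗ`, with `vᵗ` the variance of the round-`t`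
losses under the weights, gives `(Δᵀ)² ≤ (ln K) ∑ₜ vᵗ + ((2/3) ln K + 1) S Δᵀ`. By the
Bhatia–Davis inequality and Cauchy–Schwarz, `∑ₜ vᵗ ≤ S (H - L₋)(L₊ - H) / (L₊ - L₋)`, which is at
most `S ((L₊ - L*)(L* - L₋) / (L₊ - L₋) + (H - L*))` once `H ≥ L*`. With `H - L* ≤ 2Δᵀ` this is a
quadratic inequality `(Δᵀ)² ≤ A + B Δᵀ`, and `Δᵀ ≤ √A + B` gives the bound.
-/

open Real

theorem two_mul_exp_mul_three_sub_le (y : ℝ) : 2 * exp y * (3 - y) ≤ y ^ 2 + 4 * y + 6 := by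
  set g : ℝ → ℝ := fun y => y ^ 2 + 4 * y + 6 - 2 * exp y * (3 - y)
  set g' : ℝ → ℝ := fun y => 2 * y + 4 - 2 * exp y * (2 - y)
  have hg : ∀ x, HasDerivAt g (g' x) x := fun x =>
    ((((hasDerivAt_pow 2 x).add ((hasDerivAt_id x).const_mul 4)).add_const 6).sub
      (((hasDerivAt_exp x).const_mul 2).mul ((hasDerivAt_id x).const_sub 3))).congr_deriv
      (by simp only [g', id]; ring)
  have hg' : ∀ x, HasDerivAt g' (2 - 2 * exp x * (1 - x)) x := fun x =>
    ((((hasDerivAt_id x).const_mul 2).add_const 4).sub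
      (((hasDerivAt_exp x).const_mul 2).mul ((hasDerivAt_id x).const_sub 2))).congr_deriv
      (by simp only [id]; ring)
  -- `g'' x = 2 - 2 e^x (1 - x) ≥ 0` because `1 - x ≤ e^{-x}`
  have hg'_mono : Monotone g' := monotone_of_deriv_nonneg (fun x => (hg' x).differentiableAt)
    fun x => by
      rw [(hg' x).deriv]
      have := mul_le_mul_of_nonneg_left (one_sub_le_exp_neg x) (exp_pos x).le
      rw [← exp_add, add_neg_cancel, exp_zero] at this
      linarith
  have hg'0 : g' 0 = 0 := by norm_num [g']
  have hmin : IsMinOn g Set.univ 0 :=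
    isMinOn_univ_of_deriv (hg 0).continuousAt
      (fun x _ => (hg x).differentiableAt.differentiableWithinAt)
      (fun x _ => (hg x).differentiableAt.differentiableWithinAt)
      (fun x hx => (hg x).deriv ▸ hg'0 ▸ hg'_mono hx.le)
      (fun x hx => (hg x).deriv ▸ hg'0 ▸ hg'_mono hx.le)
  have := hmin (Set.mem_univ y)
  norm_num [g] at this
  linarith

theorem exp_le_one_add_add_mul_sq {y c : ℝ} (hyc : y ≤ c) (hc : c < 3) :
    exp y ≤ 1 + y + 3 / (2 * (3 - c)) * y ^ 2 := by
  have h3y : 0 < 3 - y := by linarith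
  have hpade : exp y ≤ 1 + y + 3 / (2 * (3 - y)) * y ^ 2 := by
    rw [← sub_nonneg]
    have key : 1 + y + 3 / (2 * (3 - y)) * y ^ 2 - exp y
        = (y ^ 2 + 4 * y + 6 - 2 * exp y * (3 - y)) / (2 * (3 - y)) := by
      field_simp; ring
    rw [key]
    exact div_nonneg (by linarith [two_mul_exp_mul_three_sub_le y]) (by linarith)
  have : 3 / (2 * (3 - y)) ≤ 3 / (2 * (3 - c)) := by gcongr
  nlinarith [sq_nonneg y]

theorem le_sqrt_add_of_sq_le_add_mul {x A B : ℝ} (hA : 0 ≤ A) (hB : 0 ≤ B)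
    (h : x ^ 2 ≤ A + B * x) : x ≤ √A + B := by
  nlinarith [sq_sqrt hA, sqrt_nonneg A]

section WeightedMean

variable {ι : Type*} [Fintype ι] {w x : ι → ℝ} {a b : ℝ}

theorem le_sum_mul_of_le (hw0 : ∀ i, 0 ≤ w i) (hw1 : ∑ i, w i = 1) (ha : ∀ i, a ≤ x i) :
    a ≤ ∑ i, w i * x i :=
  calc a = ∑ i, w i * a := by rw [← Finset.sum_mul, hw1, one_mul]
    _ ≤ ∑ i, w i * x i := Finset.sum_le_sum fun i _ => mul_le_mul_of_nonneg_left (ha i) (hw0 i)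

theorem sum_mul_le_of_le (hw0 : ∀ i, 0 ≤ w i) (hw1 : ∑ i, w i = 1) (hb : ∀ i, x i ≤ b) :
    ∑ i, w i * x i ≤ b :=
  calc ∑ i, w i * x i ≤ ∑ i, w i * b :=
        Finset.sum_le_sum fun i _ => mul_le_mul_of_nonneg_left (hb i) (hw0 i)
    _ = b := by rw [← Finset.sum_mul, hw1, one_mul]

/-- The Bhatia–Davis inequality for a finitely supported distribution. -/
theorem sum_mul_sq_sub_le (hw0 : ∀ i, 0 ≤ w i) (hw1 : ∑ i, w i = 1)
    (ha : ∀ i, a ≤ x i) (hb : ∀ i, x i ≤ b) :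
    ∑ i, w i * (x i - ∑ j, w j * x j) ^ 2
      ≤ (b - ∑ j, w j * x j) * (∑ j, w j * x j - a) := by
  set μ := ∑ j, w j * x j
  have key : ∑ i, w i * (x i - μ) ^ 2 + ∑ i, w i * ((b - x i) * (x i - a))
      = (b - μ) * (μ - a) := by
    rw [← Finset.sum_add_distrib]
    calc ∑ i, (w i * (x i - μ) ^ 2 + w i * ((b - x i) * (x i - a)))
        = (∑ i, w i) * (μ ^ 2 - a * b) + (∑ i, w i * x i) * (a + b - 2 * μ) := by
          rw [Finset.sum_mul, Finset.sum_mul, ← Finset.sum_add_distrib]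
          exact Finset.sum_congr rfl fun i _ => by ring
      _ = (b - μ) * (μ - a) := by rw [hw1]; ring
  have : 0 ≤ ∑ i, w i * ((b - x i) * (x i - a)) := Finset.sum_nonneg fun i _ =>
    mul_nonneg (hw0 i) (mul_nonneg (by linarith [hb i]) (by linarith [ha i]))
  linarith

end WeightedMean

noncomputable def mixLoss {ι : Type*} [Fintype ι] (η : ℝ) (w x : ι → ℝ) : ℝ :=
  -η⁻¹ * log (∑ i, w i * exp (-η * x i))

section MixLoss

variable {ι : Type*} [Fintype ι] {w x : ι → ℝ} {η a b : ℝ}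

theorem sum_mul_exp_pos (hw0 : ∀ i, 0 ≤ w i) (hw1 : ∑ i, w i = 1) (y : ι → ℝ) :
    0 < ∑ i, w i * exp (y i) := by
  obtain ⟨i, -, hi⟩ : ∃ i ∈ Finset.univ, 0 < w i := by
    by_contra! h
    have := Finset.sum_nonpos h
    linarith
  exact Finset.sum_pos' (fun j _ => mul_nonneg (hw0 j) (exp_pos _).le)
    ⟨i, Finset.mem_univ i, mul_pos hi (exp_pos _)⟩

theorem mixLoss_le_sum_mul (hw0 : ∀ i, 0 ≤ w i) (hw1 : ∑ i, w i = 1) (hη : 0 < η) :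
    mixLoss η w x ≤ ∑ i, w i * x i := by
  have hjensen : exp (∑ i, w i * (-η * x i)) ≤ ∑ i, w i * exp (-η * x i) := by
    simpa only [smul_eq_mul] using
      convexOn_exp.map_sum_le (fun i _ => hw0 i) hw1 (fun i _ => Set.mem_univ (-η * x i))
  have hlog := (le_log_iff_exp_le (sum_mul_exp_pos hw0 hw1 _)).mpr hjensen
  have hsum : ∑ i, w i * (-η * x i) = -η * ∑ i, w i * x i := by
    rw [Finset.mul_sum]; exact Finset.sum_congr rfl fun i _ => by ring
  rw [hsum] at hlog
  have := mul_le_mul_of_nonneg_left hlog (inv_pos.mpr hη).le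
  rw [← mul_assoc, mul_neg, inv_mul_cancel₀ hη.ne', neg_one_mul] at this
  rw [mixLoss, neg_mul]
  linarith

theorem le_mixLoss (hw0 : ∀ i, 0 ≤ w i) (hw1 : ∑ i, w i = 1) (hη : 0 < η)
    (ha : ∀ i, a ≤ x i) : a ≤ mixLoss η w x := by
  have hle : ∑ i, w i * exp (-η * x i) ≤ exp (-η * a) :=
    sum_mul_le_of_le hw0 hw1 fun i => exp_le_exp.mpr (by nlinarith [ha i])
  have hlog := (log_le_iff_le_exp (sum_mul_exp_pos hw0 hw1 _)).mpr hle
  have := mul_le_mul_of_nonneg_left hlog (inv_pos.mpr hη).le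
  rw [← mul_assoc, mul_neg, inv_mul_cancel₀ hη.ne', neg_one_mul] at this
  rw [mixLoss, neg_mul]
  linarith

/-- Bernstein-type bound on the mixability gap. -/
theorem sum_mul_sub_mixLoss_mul_le (hw0 : ∀ i, 0 ≤ w i) (hw1 : ∑ i, w i = 1) (hη : 0 < η)
    (ha : ∀ i, a ≤ x i) (hb : ∀ i, x i ≤ b) :
    (∑ i, w i * x i - mixLoss η w x) * (3 - η * (b - a))
      ≤ 3 / 2 * η * ∑ i, w i * (x i - ∑ j, w j * x j) ^ 2 := by
  set μ := ∑ j, w j * x j with hμ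
  set v := ∑ i, w i * (x i - μ) ^ 2
  have hgap : 0 ≤ μ - mixLoss η w x := sub_nonneg.mpr (mixLoss_le_sum_mul hw0 hw1 hη)
  have hv : 0 ≤ v := Finset.sum_nonneg fun i _ => mul_nonneg (hw0 i) (sq_nonneg _)
  rcases le_or_gt 3 (η * (b - a)) with hbig | hsmall
  · nlinarith
  set C := 3 / (2 * (3 - η * (b - a)))
  have hμb : μ ≤ b := sum_mul_le_of_le hw0 hw1 hb
  set Y := ∑ i, w i * exp (η * (μ - x i))
  have hY : Y ≤ 1 + C * η ^ 2 * v :=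
    calc Y ≤ ∑ i, w i * (1 + η * (μ - x i) + C * (η * (μ - x i)) ^ 2) := by
          refine Finset.sum_le_sum fun i _ => mul_le_mul_of_nonneg_left ?_ (hw0 i)
          refine exp_le_one_add_add_mul_sq ?_ hsmall
          nlinarith [ha i]
      _ = ∑ i, (w i + η * (μ * w i - w i * x i) + C * η ^ 2 * (w i * (x i - μ) ^ 2)) :=
          Finset.sum_congr rfl fun i _ => by ring
      _ = 1 + C * η ^ 2 * v := by
          rw [Finset.sum_add_distrib, Finset.sum_add_distrib, ← Finset.mul_sum, ← Finset.mul_sum,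
            Finset.sum_sub_distrib, ← Finset.mul_sum, hw1, ← hμ]
          ring
  have hmix : mixLoss η w x = μ - η⁻¹ * log Y := by
    have hY0 : 0 < Y := sum_mul_exp_pos hw0 hw1 _
    have hsplit : ∑ i, w i * exp (-η * x i) = exp (-η * μ) * Y := by
      rw [Finset.mul_sum]
      refine Finset.sum_congr rfl fun i _ => ?_
      rw [mul_left_comm, ← exp_add]
      congr 2; ring
    rw [mixLoss, hsplit, log_mul (exp_pos _).ne' hY0.ne', log_exp]
    field_simp
    ring
  have hlogY : log Y ≤ C * η ^ 2 * v := by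
    linarith [log_le_sub_one_of_pos (sum_mul_exp_pos hw0 hw1 fun i => η * (μ - x i))]
  have hgapC : μ - mixLoss η w x ≤ C * η * v := by
    rw [hmix, sub_sub_cancel]
    calc η⁻¹ * log Y ≤ η⁻¹ * (C * η ^ 2 * v) := mul_le_mul_of_nonneg_left hlogY (by positivity)
      _ = C * η * v := by field_simp
  calc (μ - mixLoss η w x) * (3 - η * (b - a)) ≤ C * η * v * (3 - η * (b - a)) :=
        mul_le_mul_of_nonneg_right hgapC (by linarith)
    _ = 3 / 2 * η * v := by simp only [C]; field_simp

theorem mixLoss_anti (hw0 : ∀ i, 0 ≤ w i) (hw1 : ∑ i, w i = 1) {η₁ η₂ : ℝ} (hη₂ : 0 < η₂)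
    (h : η₂ ≤ η₁) : mixLoss η₁ w x ≤ mixLoss η₂ w x := by
  have hη₁ : 0 < η₁ := hη₂.trans_le h
  set p := η₁ / η₂
  have hZ₂ := sum_mul_exp_pos hw0 hw1 fun i => -η₂ * x i
  -- power-mean inequality with exponent `p = η₁ / η₂ ≥ 1`
  have hpow : (∑ i, w i * exp (-η₂ * x i)) ^ p ≤ ∑ i, w i * exp (-η₁ * x i) := by
    convert Real.rpow_arith_mean_le_arith_mean_rpow Finset.univ w (fun i => exp (-η₂ * x i))
      (fun i _ => hw0 i) hw1 (fun i _ => (exp_pos _).le) ((one_le_div hη₂).mpr h) using 3 with i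
    rw [← exp_mul]
    field_simp
  have hlog : p * log (∑ i, w i * exp (-η₂ * x i)) ≤ log (∑ i, w i * exp (-η₁ * x i)) := by
    rw [← log_rpow hZ₂]
    exact log_le_log (rpow_pos_of_pos hZ₂ p) hpow
  have := mul_le_mul_of_nonneg_left hlog (inv_pos.mpr hη₁).le
  have hp : η₁⁻¹ * p = η₂⁻¹ := by simp only [p]; field_simp
  rw [← mul_assoc, hp] at this
  unfold mixLoss
  linarith

end MixLoss

noncomputable def softmin {ι : Type*} [Fintype ι] (η : ℝ) (L : ι → ℝ) : ℝ :=
  mixLoss η (fun _ => (Fintype.card ι : ℝ)⁻¹) L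

section Softmin

variable {ι : Type*} [Fintype ι] [Nonempty ι] {η : ℝ}

theorem sum_card_inv : ∑ _i : ι, (Fintype.card ι : ℝ)⁻¹ = 1 := by
  rw [Finset.sum_const, Finset.card_univ, nsmul_eq_mul, mul_inv_cancel₀ (by positivity)]

theorem iInf_le_softmin (hη : 0 < η) (L : ι → ℝ) : ⨅ i, L i ≤ softmin η L :=
  le_mixLoss (fun _ => by positivity) sum_card_inv hη (ciInf_le (Finite.bddBelow_range L))

theorem softmin_anti {η₁ η₂ : ℝ} (hη₂ : 0 < η₂) (h : η₂ ≤ η₁) (L : ι → ℝ) :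
    softmin η₁ L ≤ softmin η₂ L :=
  mixLoss_anti (fun _ => by positivity) sum_card_inv hη₂ h

theorem softmin_le_iInf_add (hη : 0 < η) (L : ι → ℝ) :
    softmin η L ≤ (⨅ i, L i) + log (Fintype.card ι) / η := by
  obtain ⟨k, hk⟩ := exists_eq_ciInf_of_finite (f := L)
  have hle : (Fintype.card ι : ℝ)⁻¹ * exp (-η * L k)
      ≤ ∑ i, (Fintype.card ι : ℝ)⁻¹ * exp (-η * L i) :=
    Finset.single_le_sum (f := fun i => (Fintype.card ι : ℝ)⁻¹ * exp (-η * L i))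
      (fun i _ => by positivity) (Finset.mem_univ k)
  have hlog := log_le_log (by positivity) hle
  rw [log_mul (by positivity) (exp_pos _).ne', log_inv, log_exp] at hlog
  have := mul_le_mul_of_nonneg_left hlog (inv_pos.mpr hη).le
  rw [softmin, mixLoss, show (⨅ i, L i) = L k from hk.symm]
  field_simp at this ⊢
  linarith

theorem mixLoss_softmax (L x : ι → ℝ) :
    mixLoss η (fun i => exp (-η * L i) / ∑ j, exp (-η * L j)) x
      = softmin η (fun i => L i + x i) - softmin η L := by
  have hZ : 0 < ∑ j, exp (-η * L j) := Finset.sum_pos (fun j _ => exp_pos _) Finset.univ_nonempty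
  have hZ' : 0 < ∑ j, exp (-η * (L j + x j)) :=
    Finset.sum_pos (fun j _ => exp_pos _) Finset.univ_nonempty
  have hsum : ∑ i, (exp (-η * L i) / ∑ j, exp (-η * L j)) * exp (-η * x i)
      = (∑ i, exp (-η * (L i + x i))) / ∑ j, exp (-η * L j) := by
    rw [Finset.sum_div]
    refine Finset.sum_congr rfl fun i _ => ?_
    rw [div_mul_eq_mul_div, ← exp_add]
    congr 2; ring
  simp only [softmin, mixLoss, ← Finset.mul_sum]
  rw [hsum, log_div hZ'.ne' hZ.ne', log_mul (by positivity) hZ'.ne', log_mul (by positivity) hZ.ne']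
  ring

end Softmin

/-- By Cauchy–Schwarz in the form `(∑ x)² ≤ (∑ x²/r) (∑ r)`. -/
theorem sum_mul_sub_le_mul_sub_sq_div {ι : Type*} (s : Finset ι) {x r : ι → ℝ} {S : ℝ}
    (hS : 0 ≤ S) (hx : ∀ i ∈ s, 0 ≤ x i) (hxr : ∀ i ∈ s, x i ≤ r i)
    (hrS : ∀ i ∈ s, r i ≤ S) :
    ∑ i ∈ s, x i * (r i - x i)
      ≤ S * (∑ i ∈ s, x i - (∑ i ∈ s, x i) ^ 2 / ∑ i ∈ s, r i) := by
  have hr : ∀ i ∈ s, 0 ≤ r i := fun i hi => (hx i hi).trans (hxr i hi)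
  have hx_of_r : ∀ i ∈ s, r i = 0 → x i = 0 := fun i hi h0 =>
    le_antisymm (h0 ▸ hxr i hi) (hx i hi)
  have hterm : ∀ i ∈ s, x i * (r i - x i) ≤ S * (x i - x i ^ 2 / r i) := by
    intro i hi
    rcases (hr i hi).eq_or_lt with h0 | hpos
    · simp [hx_of_r i hi h0.symm]
    · have e : x i - x i ^ 2 / r i = x i * (r i - x i) / r i := by field_simp
      have hq : 0 ≤ x i * (r i - x i) / r i :=
        div_nonneg (mul_nonneg (hx i hi) (by linarith [hxr i hi])) hpos.le
      calc x i * (r i - x i) = r i * (x i * (r i - x i) / r i) := by field_simp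
        _ ≤ S * (x i * (r i - x i) / r i) := mul_le_mul_of_nonneg_right (hrS i hi) hq
        _ = S * (x i - x i ^ 2 / r i) := by rw [e]
  have hCS : (∑ i ∈ s, x i) ^ 2 ≤ (∑ i ∈ s, x i ^ 2 / r i) * ∑ i ∈ s, r i := by
    refine Finset.sum_sq_le_sum_mul_sum_of_sq_le_mul s
      (fun i hi => div_nonneg (sq_nonneg _) (hr i hi)) hr fun i hi => ?_
    rcases (hr i hi).eq_or_lt with h0 | hpos
    · simp [hx_of_r i hi h0.symm]
    · rw [div_mul_cancel₀ _ hpos.ne']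
  have hdiv : (∑ i ∈ s, x i) ^ 2 / ∑ i ∈ s, r i ≤ ∑ i ∈ s, x i ^ 2 / r i :=
    div_le_of_le_mul₀ (Finset.sum_nonneg hr)
      (Finset.sum_nonneg fun i hi => div_nonneg (sq_nonneg _) (hr i hi)) hCS
  calc ∑ i ∈ s, x i * (r i - x i) ≤ ∑ i ∈ s, S * (x i - x i ^ 2 / r i) :=
        Finset.sum_le_sum hterm
    _ = S * (∑ i ∈ s, x i - ∑ i ∈ s, x i ^ 2 / r i) := by
        rw [← Finset.mul_sum, Finset.sum_sub_distrib]
    _ ≤ S * (∑ i ∈ s, x i - (∑ i ∈ s, x i) ^ 2 / ∑ i ∈ s, r i) := by gcongr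

theorem sub_sub_sq_div_le {a b c h : ℝ} (hac : a ≤ c) (hcb : c ≤ b) (hch : c ≤ h) :
    (h - a) - (h - a) ^ 2 / (b - a) ≤ (b - c) * (c - a) / (b - a) + (h - c) := by
  have hsq : (c - a) ^ 2 ≤ (h - a) ^ 2 := pow_le_pow_left₀ (by linarith) (by linarith) 2
  calc (h - a) - (h - a) ^ 2 / (b - a) ≤ (h - a) - (c - a) ^ 2 / (b - a) := by
        gcongr; linarith
    _ = (b - c) * (c - a) / (b - a) + (h - c) := by
        rcases (sub_nonneg.mpr (hac.trans hcb)).eq_or_lt with hab | hab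
        · obtain rfl : c = a := by linarith
          obtain rfl : b = c := by linarith
          simp
        · field_simp; ring

section AdaHedge

variable {K : ℕ} {l : ℕ → Fin K → ℝ}

theorem ahWeight_nonneg (Δ : ℝ) (t : ℕ) (k : Fin K) : 0 ≤ ahWeight K l Δ t k := by
  unfold ahWeight
  split_ifs <;> positivity

theorem sum_ahWeight [NeZero K] (Δ : ℝ) (t : ℕ) : ∑ k, ahWeight K l Δ t k = 1 := by
  classical
  unfold ahWeight
  split_ifs with hΔ
  · rw [← Finset.sum_div, div_self (Finset.sum_pos (fun _ _ => exp_pos _) univ_nonempty).ne']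
  · obtain ⟨k, hk⟩ := exists_eq_ciInf_of_finite (f := cumLoss K l t)
    have hpos : (0 : ℝ) < (univ.filter fun j => cumLoss K l t j = ⨅ j', cumLoss K l t j').card :=
      Nat.cast_pos.mpr (Finset.card_pos.mpr ⟨k, by simp [hk]⟩)
    rw [Finset.sum_ite, Finset.sum_const_zero, add_zero, Finset.sum_const, nsmul_eq_mul,
      mul_one_div_cancel hpos.ne']

theorem ahWeight_of_pos {Δ : ℝ} (hΔ : 0 < Δ) (t : ℕ) :
    ahWeight K l Δ t = fun k => exp (-(log K / Δ) * cumLoss K l t k) /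
      ∑ j, exp (-(log K / Δ) * cumLoss K l t j) := by
  ext k
  simp only [ahWeight, if_pos hΔ]

theorem ahMixLoss_of_pos {Δ : ℝ} (hΔ : 0 < Δ) (t : ℕ) :
    ahMixLoss K l Δ t = mixLoss (log K / Δ) (ahWeight K l Δ t) (l t) := by
  simp only [ahMixLoss, if_pos hΔ, mixLoss, inv_div]

theorem cumLoss_succ (t : ℕ) (k : Fin K) : cumLoss K l (t + 1) k = cumLoss K l t k + l t k :=
  Finset.sum_range_succ _ t

noncomputable def lossRange (l : ℕ → Fin K → ℝ) (t : ℕ) : ℝ := (⨆ k, l t k) - ⨅ k, l t k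

noncomputable def ahMixGap (K : ℕ) (l : ℕ → Fin K → ℝ) (Δ : ℝ) (t : ℕ) : ℝ :=
  ahHedgeLoss K l Δ t - ahMixLoss K l Δ t

noncomputable def ahVariance (K : ℕ) (l : ℕ → Fin K → ℝ) (Δ : ℝ) (t : ℕ) : ℝ :=
  ∑ k, ahWeight K l Δ t k * (l t k - ahHedgeLoss K l Δ t) ^ 2

theorem lossRange_nonneg [NeZero K] (t : ℕ) : 0 ≤ lossRange l t :=
  sub_nonneg.mpr
    ((ciInf_le (Finite.bddBelow_range _) 0).trans (le_ciSup (Finite.bddAbove_range _) 0))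

theorem iInf_le_ahHedgeLoss [NeZero K] (Δ : ℝ) (t : ℕ) : ⨅ k, l t k ≤ ahHedgeLoss K l Δ t :=
  le_sum_mul_of_le (ahWeight_nonneg Δ t) (sum_ahWeight Δ t) (ciInf_le (Finite.bddBelow_range _))

theorem ahHedgeLoss_le_iSup [NeZero K] (Δ : ℝ) (t : ℕ) : ahHedgeLoss K l Δ t ≤ ⨆ k, l t k :=
  sum_mul_le_of_le (ahWeight_nonneg Δ t) (sum_ahWeight Δ t) (le_ciSup (Finite.bddAbove_range _))

theorem ahVariance_le [NeZero K] (Δ : ℝ) (t : ℕ) :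
    ahVariance K l Δ t
      ≤ ((⨆ k, l t k) - ahHedgeLoss K l Δ t) * (ahHedgeLoss K l Δ t - ⨅ k, l t k) :=
  sum_mul_sq_sub_le (ahWeight_nonneg Δ t) (sum_ahWeight Δ t)
    (ciInf_le (Finite.bddBelow_range _)) (le_ciSup (Finite.bddAbove_range _))

theorem ahMixLoss_le_ahHedgeLoss (hK : 1 < K) (Δ : ℝ) (t : ℕ) :
    ahMixLoss K l Δ t ≤ ahHedgeLoss K l Δ t := by
  have : NeZero K := ⟨by omega⟩
  by_cases hΔ : 0 < Δ
  · rw [ahMixLoss_of_pos hΔ]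
    exact mixLoss_le_sum_mul (ahWeight_nonneg Δ t) (sum_ahWeight Δ t)
      (div_pos (log_pos (by exact_mod_cast hK)) hΔ)
  -- only minimizers of `cumLoss K l t` carry weight, and the minimum grows by at most their loss
  set δ := (⨅ k, cumLoss K l (t + 1) k) - ⨅ k, cumLoss K l t k
  have hterm : ∀ k, ahWeight K l Δ t k * δ ≤ ahWeight K l Δ t k * l t k := fun k => by
    simp only [ahWeight, if_neg hΔ]
    split_ifs with hk
    · refine mul_le_mul_of_nonneg_left ?_ (by positivity)
      have := ciInf_le (Finite.bddBelow_range (cumLoss K l (t + 1))) k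
      rw [cumLoss_succ, hk] at this
      linarith
    · simp
  calc ahMixLoss K l Δ t = ∑ k, ahWeight K l Δ t k * δ := by
        rw [← Finset.sum_mul, sum_ahWeight, one_mul, ahMixLoss, if_neg hΔ]
    _ ≤ ahHedgeLoss K l Δ t := Finset.sum_le_sum fun k _ => hterm k

theorem iInf_le_ahMixLoss (hK : 1 < K) (Δ : ℝ) (t : ℕ) : ⨅ k, l t k ≤ ahMixLoss K l Δ t := by
  have : NeZero K := ⟨by omega⟩
  by_cases hΔ : 0 < Δ
  · rw [ahMixLoss_of_pos hΔ]
    exact le_mixLoss (ahWeight_nonneg Δ t) (sum_ahWeight Δ t)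
      (div_pos (log_pos (by exact_mod_cast hK)) hΔ) (ciInf_le (Finite.bddBelow_range _))
  obtain ⟨k, hk⟩ := exists_eq_ciInf_of_finite (f := cumLoss K l (t + 1))
  have h1 := ciInf_le (Finite.bddBelow_range (cumLoss K l t)) k
  have h2 := ciInf_le (Finite.bddBelow_range (l t)) k
  rw [ahMixLoss, if_neg hΔ, ← hk, cumLoss_succ]
  linarith

theorem ahMixGap_nonneg (hK : 1 < K) (Δ : ℝ) (t : ℕ) : 0 ≤ ahMixGap K l Δ t :=
  sub_nonneg.mpr (ahMixLoss_le_ahHedgeLoss hK Δ t)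

theorem ahMixGap_le_lossRange (hK : 1 < K) (Δ : ℝ) (t : ℕ) : ahMixGap K l Δ t ≤ lossRange l t := by
  have : NeZero K := ⟨by omega⟩
  unfold ahMixGap lossRange
  linarith [ahHedgeLoss_le_iSup (l := l) Δ t, iInf_le_ahMixLoss (l := l) hK Δ t]

theorem ahMixGap_mul_le (hK : 1 < K) {Δ : ℝ} (hΔ : 0 ≤ Δ) (t : ℕ) :
    3 * (ahMixGap K l Δ t * Δ)
      ≤ (3 / 2 * ahVariance K l Δ t + lossRange l t * ahMixGap K l Δ t) * log K := by
  have : NeZero K := ⟨by omega⟩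
  have hlogK : 0 < log K := log_pos (by exact_mod_cast hK)
  have hv : 0 ≤ ahVariance K l Δ t :=
    Finset.sum_nonneg fun k _ => mul_nonneg (ahWeight_nonneg Δ t k) (sq_nonneg _)
  have hsg := mul_nonneg (lossRange_nonneg (l := l) t) (ahMixGap_nonneg (l := l) hK Δ t)
  rcases hΔ.eq_or_lt with rfl | hΔ
  · rw [mul_zero, mul_zero]
    exact mul_nonneg (by linarith) hlogK.le
  have key : ahMixGap K l Δ t * (3 - log K / Δ * lossRange l t)
      ≤ 3 / 2 * (log K / Δ) * ahVariance K l Δ t := by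
    rw [ahMixGap, ahMixLoss_of_pos hΔ]
    exact sum_mul_sub_mixLoss_mul_le (ahWeight_nonneg Δ t) (sum_ahWeight Δ t) (div_pos hlogK hΔ)
      (ciInf_le (Finite.bddBelow_range (l t))) (le_ciSup (Finite.bddAbove_range (l t)))
  have hηΔ : log K / Δ * Δ = log K := div_mul_cancel₀ _ hΔ.ne'
  linear_combination Δ * key + (3 / 2 * ahVariance K l Δ t + lossRange l t * ahMixGap K l Δ t) * hηΔ

theorem add_ahMixGap_sq_le (hK : 1 < K) {Δ : ℝ} (hΔ : 0 ≤ Δ) (t : ℕ) :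
    (Δ + ahMixGap K l Δ t) ^ 2
      ≤ Δ ^ 2 + ahVariance K l Δ t * log K
        + (2 / 3 * log K + 1) * (lossRange l t * ahMixGap K l Δ t) := by
  have hgap := ahMixGap_nonneg (l := l) hK Δ t
  have hgap_sq : ahMixGap K l Δ t ^ 2 ≤ lossRange l t * ahMixGap K l Δ t := by
    rw [sq]; exact mul_le_mul_of_nonneg_right (ahMixGap_le_lossRange hK Δ t) hgap
  linarith [ahMixGap_mul_le (l := l) hK hΔ t]

theorem ahDelta_succ (t : ℕ) :
    ahDelta K l (t + 1) = ahDelta K l t + ahMixGap K l (ahDelta K l t) t := rfl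

theorem ahDelta_eq_sum (T : ℕ) :
    ahDelta K l T = ∑ t ∈ range T, ahMixGap K l (ahDelta K l t) t := by
  induction T with
  | zero => rfl
  | succ T ih => rw [ahDelta_succ, Finset.sum_range_succ, ← ih]

theorem ahDelta_nonneg (hK : 1 < K) (T : ℕ) : 0 ≤ ahDelta K l T := by
  rw [ahDelta_eq_sum]
  exact Finset.sum_nonneg fun t _ => ahMixGap_nonneg hK _ t

theorem ahDelta_mono (hK : 1 < K) : Monotone (ahDelta K l) :=
  monotone_nat_of_le_succ fun t => by
    rw [ahDelta_succ]; linarith [ahMixGap_nonneg (l := l) hK (ahDelta K l t) t]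

theorem ahDelta_sq_le (hK : 1 < K) {S : ℝ} {T : ℕ}
    (hS : ∀ t ∈ range T, lossRange l t ≤ S) :
    ahDelta K l T ^ 2 ≤ (∑ t ∈ range T, ahVariance K l (ahDelta K l t) t) * log K
      + (2 / 3 * log K + 1) * S * ahDelta K l T := by
  induction T with
  | zero => simp [ahDelta]
  | succ T ih =>
    have hstep := add_ahMixGap_sq_le (l := l) hK (ahDelta_nonneg (l := l) hK T) T
    have hrange : lossRange l T * ahMixGap K l (ahDelta K l T) T
        ≤ S * ahMixGap K l (ahDelta K l T) T :=
      mul_le_mul_of_nonneg_right (hS T (by simp)) (ahMixGap_nonneg hK _ T)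
    have hC : 0 ≤ 2 / 3 * log K + 1 := by
      have := log_pos (show (1 : ℝ) < K by exact_mod_cast hK); positivity
    have := ih fun t ht => hS t (Finset.range_subset_range.mpr (Nat.le_succ T) ht)
    rw [ahDelta_succ, Finset.sum_range_succ]
    linarith [mul_le_mul_of_nonneg_left hrange hC]

noncomputable def ahPotential (K : ℕ) (l : ℕ → Fin K → ℝ) (Δ : ℝ) (t : ℕ) : ℝ :=
  if 0 < Δ then softmin (log K / Δ) (cumLoss K l t) else ⨅ k, cumLoss K l t k

theorem ahMixLoss_eq_ahPotential_sub [NeZero K] (Δ : ℝ) (t : ℕ) :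
    ahMixLoss K l Δ t = ahPotential K l Δ (t + 1) - ahPotential K l Δ t := by
  by_cases hΔ : 0 < Δ
  · have hcum : cumLoss K l (t + 1) = fun k => cumLoss K l t k + l t k := funext (cumLoss_succ t)
    rw [ahMixLoss_of_pos hΔ, ahWeight_of_pos hΔ, mixLoss_softmax, ahPotential, ahPotential,
      if_pos hΔ, if_pos hΔ, hcum]
  · simp only [ahMixLoss, ahPotential, if_neg hΔ]

theorem ahPotential_mono (hK : 1 < K) {Δ₁ Δ₂ : ℝ} (h₁ : 0 ≤ Δ₁) (h₁₂ : Δ₁ ≤ Δ₂) (t : ℕ) :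
    ahPotential K l Δ₁ t ≤ ahPotential K l Δ₂ t := by
  have : NeZero K := ⟨by omega⟩
  have hlogK : 0 < log K := log_pos (by exact_mod_cast hK)
  rcases h₁.eq_or_lt with rfl | h₁
  · rcases h₁₂.eq_or_lt with rfl | h₂
    · exact le_rfl
    · simp only [ahPotential, lt_irrefl, if_false, if_pos h₂]
      exact iInf_le_softmin (div_pos hlogK h₂) _
  · have h₂ := h₁.trans_le h₁₂
    simp only [ahPotential, if_pos h₁, if_pos h₂]
    exact softmin_anti (div_pos hlogK h₂) (div_le_div_of_nonneg_left hlogK.le h₁ h₁₂) _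

theorem ahPotential_le (hK : 1 < K) {Δ : ℝ} (hΔ : 0 ≤ Δ) (t : ℕ) :
    ahPotential K l Δ t ≤ (⨅ k, cumLoss K l t k) + Δ := by
  have : NeZero K := ⟨by omega⟩
  have hlogK : 0 < log K := log_pos (by exact_mod_cast hK)
  unfold ahPotential
  split_ifs with hΔ'
  · have := softmin_le_iInf_add (div_pos hlogK hΔ') (cumLoss K l t)
    rwa [Fintype.card_fin, div_div_cancel₀ hlogK.ne'] at this
  · linarith

theorem sum_ahMixLoss_le (hK : 1 < K) (T : ℕ) :
    ∑ t ∈ range T, ahMixLoss K l (ahDelta K l t) t ≤ ahPotential K l (ahDelta K l T) T := by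
  have : NeZero K := ⟨by omega⟩
  induction T with
  | zero => simp [ahPotential, ahDelta, cumLoss]
  | succ T ih =>
    rw [Finset.sum_range_succ, ahMixLoss_eq_ahPotential_sub]
    linarith [ahPotential_mono (l := l) hK (ahDelta_nonneg (l := l) hK T)
      (ahDelta_mono (l := l) hK (Nat.le_succ T)) (T + 1)]

theorem sum_ahHedgeLoss_le (hK : 1 < K) (T : ℕ) :
    ∑ t ∈ range T, ahHedgeLoss K l (ahDelta K l t) t
      ≤ (⨅ k, cumLoss K l T k) + 2 * ahDelta K l T := by
  have hsplit : ∑ t ∈ range T, ahHedgeLoss K l (ahDelta K l t) t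
      = ∑ t ∈ range T, ahMixLoss K l (ahDelta K l t) t + ahDelta K l T := by
    rw [ahDelta_eq_sum, ← Finset.sum_add_distrib]
    exact Finset.sum_congr rfl fun t _ => by rw [ahMixGap]; ring
  linarith [sum_ahMixLoss_le (l := l) hK T,
    ahPotential_le (l := l) hK (ahDelta_nonneg (l := l) hK T) T]

theorem sum_ahVariance_le [NeZero K] {S : ℝ} {T : ℕ} (hS0 : 0 ≤ S)
    (hS : ∀ t ∈ range T, lossRange l t ≤ S) :
    ∑ t ∈ range T, ahVariance K l (ahDelta K l t) t
      ≤ S * (∑ t ∈ range T, (ahHedgeLoss K l (ahDelta K l t) t - ⨅ k, l t k)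
        - (∑ t ∈ range T, (ahHedgeLoss K l (ahDelta K l t) t - ⨅ k, l t k)) ^ 2
          / ∑ t ∈ range T, lossRange l t) := by
  refine (Finset.sum_le_sum fun t _ => (ahVariance_le _ t).trans_eq ?_).trans
    (sum_mul_sub_le_mul_sub_sq_div _ hS0 (fun t _ => sub_nonneg.mpr (iInf_le_ahHedgeLoss _ t))
      (fun t _ => sub_le_sub_right (ahHedgeLoss_le_iSup _ t) _) hS)
  unfold lossRange
  ring

theorem sum_iInf_le_iInf_cumLoss [NeZero K] (T : ℕ) :
    ∑ t ∈ range T, ⨅ k, l t k ≤ ⨅ k, cumLoss K l T k :=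
  le_ciInf fun k => Finset.sum_le_sum fun t _ => ciInf_le (Finite.bddBelow_range (l t)) k

theorem iInf_cumLoss_le_sum_iSup [NeZero K] (T : ℕ) :
    ⨅ k, cumLoss K l T k ≤ ∑ t ∈ range T, ⨆ k, l t k :=
  ciInf_le_of_le (Finite.bddBelow_range _) 0
    (Finset.sum_le_sum fun t _ => le_ciSup (Finite.bddAbove_range (l t)) 0)

end AdaHedge

/-- **AdaHedge regret bound** (equation (3.2)): with `H^{(T)}` the cumulative hedge
loss of AdaHedge, `L_*^{(T)}` the cumulative loss of the best expert, `L_+^{(T)}`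
and `L_−^{(T)}` the cumulative maximal and minimal per-round losses, and `S^{(T)}`
the largest per-round loss range,
`H^{(T)} ≤ L_* + 2·√(S·ln K·(L_+ − L_*)(L_* − L_−)/(L_+ − L_−)) + S·((16/3)·ln K + 2)`
(the fraction being `0` when `L_+ = L_−`, as is Lean's division convention). -/
theorem adahedge_regret_bound
    (K T : ℕ) (hK : 2 ≤ K) (hT : 1 ≤ T)
    (l : ℕ → Fin K → ℝ)
    (H Lstar Lplus Lminus S : ℝ)
    (hH : H = ∑ t ∈ Finset.range T, ahHedgeLoss K l (ahDelta K l t) t)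
    (hLstar : Lstar = ⨅ k, cumLoss K l T k)
    (hLplus : Lplus = ∑ t ∈ Finset.range T, ⨆ k, l t k)
    (hLminus : Lminus = ∑ t ∈ Finset.range T, ⨅ k, l t k)
    (hS : S = (Finset.range T).sup'
        (Finset.nonempty_range_iff.mpr (by omega))
        (fun t => (⨆ k, l t k) - ⨅ k, l t k)) :
    H ≤ Lstar +
      2 * Real.sqrt (S * Real.log K *
        ((Lplus - Lstar) * (Lstar - Lminus) / (Lplus - Lminus))) +
      S * (16 / 3 * Real.log K + 2) := by
  have : NeZero K := ⟨by omega⟩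
  have hlogK : 0 < log K := log_pos (by exact_mod_cast hK)
  have hrange : ∀ t ∈ range T, lossRange l t ≤ S := fun t ht => hS ▸ le_sup' (lossRange l) ht
  have hS0 : 0 ≤ S := (lossRange_nonneg 0).trans (hrange 0 (mem_range.mpr hT))
  set A := S * log K * ((Lplus - Lstar) * (Lstar - Lminus) / (Lplus - Lminus))
  set Δ := ahDelta K l T
  have hHΔ : H ≤ Lstar + 2 * Δ := hH ▸ hLstar ▸ sum_ahHedgeLoss_le hK T
  rcases le_or_gt H Lstar with hHL | hHL
  · have : 0 ≤ S * (16 / 3 * log K + 2) := by positivity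
    linarith [sqrt_nonneg A]
  have hLminus_le : Lminus ≤ Lstar := hLminus ▸ hLstar ▸ sum_iInf_le_iInf_cumLoss T
  have hLstar_le : Lstar ≤ Lplus := hLstar ▸ hLplus ▸ iInf_cumLoss_le_sum_iSup T
  have hV : (∑ t ∈ range T, ahVariance K l (ahDelta K l t) t)
      ≤ S * ((Lplus - Lstar) * (Lstar - Lminus) / (Lplus - Lminus) + (H - Lstar)) := by
    have hsum : ∑ t ∈ range T, lossRange l t = Lplus - Lminus := by
      rw [hLplus, hLminus, ← Finset.sum_sub_distrib]; rfl
    have := sum_ahVariance_le hS0 hrange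
    rw [Finset.sum_sub_distrib, ← hH, ← hLminus, hsum] at this
    exact this.trans (mul_le_mul_of_nonneg_left (sub_sub_sq_div_le hLminus_le hLstar_le hHL.le) hS0)
  have hq : Δ ^ 2 ≤ A + (8 / 3 * log K + 1) * S * Δ := by
    have hHL' : S * (H - Lstar) * log K ≤ S * (2 * Δ) * log K := by gcongr; linarith
    linarith [ahDelta_sq_le (l := l) hK hrange, mul_le_mul_of_nonneg_right hV hlogK.le]
  have hA : 0 ≤ A := mul_nonneg (by positivity) (div_nonneg
    (mul_nonneg (sub_nonneg.mpr hLstar_le) (sub_nonneg.mpr hLminus_le)) (by linarith))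
  have := le_sqrt_add_of_sq_le_add_mul hA (by positivity) hq
  linarith
end

section
/- Boundedness of the adaptive conformal inference iterates: Let α ∈ [0,1], γ > 0, let φ^{(t)} ∈ {0,1} for t ≥ 1, and define the sequence α^{(1)} = α and α^{(t+1)} = α^{(t)} + γ·(α − φ^{(t)}) for all t ≥ 1. Assume that for every t, φ^{(t)} = 0 whenever α^{(t)} < 0 and φ^{(t)} = 1 whenever α^{(t)} > 1 (i.e., when the error level is below 0 the prediction set is all of ℝ so no miscoverage occurs, and when it exceeds 1 the prediction set is empty so miscoverage always occurs). Then α^{(t)} ∈ [−γ, 1+γ] for all t ≥ 1. -/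
/-- Boundedness of the adaptive conformal inference iterates: with target level
`α ∈ [0,1]`, step size `γ > 0`, miscoverage indicators `φ t ∈ {0,1}`, and the
ACI recursion `a 0 = α`, `a (t+1) = a t + γ·(α − φ t)` (0-indexed, so `a t` is
`α^{(t+1)}`), under the convention that no miscoverage occurs when the error
level is below `0` (`φ t = 0` when `a t < 0`) and miscoverage always occurs
when it exceeds `1` (`φ t = 1` when `a t > 1`), every iterate lies in
`[−γ, 1+γ]`. -/
theorem aci_iterates_bounded
    (α γ : ℝ) (hα : α ∈ Set.Icc (0 : ℝ) 1) (hγ : 0 < γ)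
    (φ : ℕ → ℝ) (hφ01 : ∀ t, φ t = 0 ∨ φ t = 1)
    (a : ℕ → ℝ) (ha0 : a 0 = α)
    (harec : ∀ t, a (t + 1) = a t + γ * (α - φ t))
    (hlow : ∀ t, a t < 0 → φ t = 0)
    (hhigh : ∀ t, 1 < a t → φ t = 1) :
    ∀ t, a t ∈ Set.Icc (-γ) (1 + γ) := by
  obtain ⟨hα0, hα1⟩ := hα
  intro t
  induction t with
  | zero =>
    constructor <;> simp only [ha0] <;> nlinarith
  | succ t ih =>
    obtain ⟨ihl, ihr⟩ := ih
    rw [harec]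
    rcases lt_or_ge (a t) 0 with h | h
    · rw [hlow t h]
      constructor <;> nlinarith
    · rcases lt_or_ge 1 (a t) with h1 | h1
      · rw [hhigh t h1]
        constructor <;> nlinarith
      · rcases hφ01 t with h2 | h2 <;> rw [h2] <;> constructor <;> nlinarith
end

section
/- Empirical coverage bound for adaptive conformal inference: Let α ∈ [0,1], γ > 0, let φ^{(t)} ∈ {0,1} for t ≥ 1, and define α^{(1)} = α and α^{(t+1)} = α^{(t)} + γ·(α − φ^{(t)}) for all t ≥ 1. If α^{(t)} ∈ [−γ, 1+γ] for all t, then for every T ≥ 1, |(1/T)·∑_{t=1}^T φ^{(t)} − α| = |α^{(1)} − α^{(T+1)}|/(T·γ) ≤ (max(α, 1−α) + γ)/(T·γ). In particular, the empirical miscoverage frequency (1/T)·∑_{t=1}^T φ^{(t)} converges to α as T → ∞. -/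
/-- Empirical coverage bound for adaptive conformal inference: with target level
`α ∈ [0,1]`, step size `γ > 0`, miscoverage indicators `φ t ∈ {0,1}`, and the
ACI recursion `a 0 = α`, `a (t+1) = a t + γ·(α − φ t)` (0-indexed, so `a 0` is
`α^{(1)}` and `a T` is `α^{(T+1)}`), if all iterates lie in `[−γ, 1+γ]` then for
every `T ≥ 1` the empirical miscoverage frequency satisfies
`|(1/T)·∑_{t<T} φ t − α| = |a 0 − a T|/(T·γ) ≤ (max(α, 1−α) + γ)/(T·γ)`;
in particular it converges to `α` as `T → ∞`. -/
theorem aci_empirical_coverage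
    (α γ : ℝ) (hα : α ∈ Set.Icc (0 : ℝ) 1) (hγ : 0 < γ)
    (φ : ℕ → ℝ) (hφ01 : ∀ t, φ t = 0 ∨ φ t = 1)
    (a : ℕ → ℝ) (ha0 : a 0 = α)
    (harec : ∀ t, a (t + 1) = a t + γ * (α - φ t))
    (hbdd : ∀ t, a t ∈ Set.Icc (-γ) (1 + γ)) :
    (∀ T : ℕ, 1 ≤ T →
      |(1 / (T : ℝ)) * ∑ t ∈ Finset.range T, φ t - α| = |a 0 - a T| / (T * γ) ∧
      |(1 / (T : ℝ)) * ∑ t ∈ Finset.range T, φ t - α| ≤ (max α (1 - α) + γ) / (T * γ)) ∧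
    Filter.Tendsto (fun T : ℕ => (1 / (T : ℝ)) * ∑ t ∈ Finset.range T, φ t)
      Filter.atTop (nhds α) := by
  -- closed form for the iterates
  have hform : ∀ T : ℕ, a T = α + γ * ((T : ℝ) * α - ∑ t ∈ Finset.range T, φ t) := by
    intro T
    induction T with
    | zero => simp [ha0]
    | succ n ih =>
        rw [harec n, ih, Finset.sum_range_succ]
        push_cast
        ring
  have habs_bound : ∀ T : ℕ, |a 0 - a T| ≤ max α (1 - α) + γ := by
    intro T
    obtain ⟨h1, h2⟩ := hbdd T
    rw [ha0, abs_le]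
    constructor
    · have : α - a T ≥ α - (1 + γ) := by linarith
      have h3 : α - (1 + γ) ≥ -((1 - α) + γ) := by linarith
      have := le_max_right α (1 - α)
      linarith
    · have := le_max_left α (1 - α)
      linarith
  have hkey : ∀ T : ℕ, 1 ≤ T →
      |(1 / (T : ℝ)) * ∑ t ∈ Finset.range T, φ t - α| = |a 0 - a T| / (T * γ) ∧
      |(1 / (T : ℝ)) * ∑ t ∈ Finset.range T, φ t - α| ≤ (max α (1 - α) + γ) / (T * γ) := by
    intro T hT
    have hTpos : (0 : ℝ) < T := by exact_mod_cast hT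
    have heq : (1 / (T : ℝ)) * ∑ t ∈ Finset.range T, φ t - α
        = (a 0 - a T) / (T * γ) := by
      rw [ha0, hform T]
      field_simp
      ring
    have heqabs : |(1 / (T : ℝ)) * ∑ t ∈ Finset.range T, φ t - α|
        = |a 0 - a T| / (T * γ) := by
      rw [heq, abs_div]
      congr 1
      exact abs_of_pos (mul_pos hTpos hγ)
    refine ⟨heqabs, ?_⟩
    rw [heqabs]
    exact div_le_div_of_nonneg_right (habs_bound T) (by positivity) |>.trans_eq rfl
  refine ⟨hkey, ?_⟩
  have hsub : Filter.Tendsto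
      (fun T : ℕ => (1 / (T : ℝ)) * ∑ t ∈ Finset.range T, φ t - α)
      Filter.atTop (nhds 0) := by
    refine squeeze_zero_norm' (a := fun T : ℕ => (max α (1 - α) + γ) / (T * γ)) ?_ ?_
    · filter_upwards [Filter.eventually_ge_atTop 1] with T hT
      simpa [Real.norm_eq_abs] using (hkey T hT).2
    · have : (fun T : ℕ => (max α (1 - α) + γ) / (T * γ))
          = fun T : ℕ => ((max α (1 - α) + γ) / γ) * (1 / (T : ℝ)) := by
        funext T
        rw [mul_one_div, div_div, mul_comm γ (T : ℝ)]
      rw [this]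
      have := (tendsto_one_div_atTop_nhds_zero_nat).const_mul ((max α (1 - α) + γ) / γ)
      simpa using this
  have := hsub.add_const α
  simpa using this
end
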